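/- Let R be a commutative Noetherian ring, I a directed partially ordered set, and (M_i)_{i∈I} a directed system of R-modules with direct limit M = colim M_i. Then every associated prime of M is an associated prime of some M_i; that is, Ass_R(colim M_i) ⊆ ⋃_{i∈I} Ass_R(M_i). -/

import Mathlib

/-!
Over a Noetherian ring an associated prime `p = Ann(of i m)` of the direct limit is finitely
generated, so finitely many relations `r • of i m = 0` all hold at one stage `k`; there
`p ≤ Ann(f i k m) ≤ Ann(of i m) = p`, making `p` an associated prime of `G k`.
-/

open Submodule

theorem Submodule.colon_bot_singleton_le_map {R M N : Type*} [Semiring R] [AddCommMonoid M]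
    [Module R M] [AddCommMonoid N] [Module R N] (g : M →ₗ[R] N) (x : M) :
    colon (⊥ : Submodule R M) {x} ≤ colon ⊥ {g x} := fun r hr => by
  rw [mem_colon_singleton, mem_bot] at hr ⊢
  rw [← map_smul, hr, map_zero]

namespace Module.DirectLimit

variable {R : Type*} [Semiring R] {ι : Type*} [Preorder ι] [IsDirectedOrder ι] [DecidableEq ι]
  {G : ι → Type*} [∀ i, AddCommMonoid (G i)] [∀ i, Module R (G i)]
  {f : ∀ i j, i ≤ j → G i →ₗ[R] G j} [DirectedSystem G (f · · ·)]

theorem exists_le_colon_bot_f_of_fg {I : Ideal R} (hI : I.FG) {i : ι} {x : G i}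
    (h : I ≤ colon ⊥ {of R ι G f i x}) : ∃ j, ∃ hij : i ≤ j, I ≤ colon ⊥ {f i j hij x} := by
  induction I, hI using Submodule.fg_induction with
  | singleton r =>
    have hr : of R ι G f i (r • x) = 0 := by
      simpa [span_singleton_le_iff_mem] using h
    obtain ⟨j, hij, hj⟩ := of.zero_exact hr
    refine ⟨j, hij, (span_singleton_le_iff_mem _ _).mpr ?_⟩
    rw [mem_colon_singleton, mem_bot, ← map_smul, hj]
  | sup I₁ I₂ _ _ ih₁ ih₂ =>
    obtain ⟨j₁, hij₁, hj₁⟩ := ih₁ (le_sup_left.trans h)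
    obtain ⟨j₂, hij₂, hj₂⟩ := ih₂ (le_sup_right.trans h)
    obtain ⟨k, hj₁k, hj₂k⟩ := directed_of (· ≤ ·) j₁ j₂
    have hmono : ∀ j (hij : i ≤ j) (hjk : j ≤ k),
        colon ⊥ {f i j hij x} ≤ colon ⊥ {f i k (hij.trans hjk) x} := fun j hij hjk => by
      rw [← DirectedSystem.map_map (f := (f · · ·)) hij hjk]
      exact colon_bot_singleton_le_map (f j k hjk) _
    exact ⟨k, hij₁.trans hj₁k,
      sup_le (hj₁.trans (hmono j₁ hij₁ hj₁k)) (hj₂.trans (hmono j₂ hij₂ hj₂k))⟩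

end Module.DirectLimit

theorem stmt_0 {R : Type} [CommRing R] [IsNoetherianRing R]
    {ι : Type} [PartialOrder ι] [IsDirected ι (· ≤ ·)] [DecidableEq ι]
    (G : ι → Type) [∀ i, AddCommGroup (G i)] [∀ i, Module R (G i)]
    (f : ∀ i j, i ≤ j → G i →ₗ[R] G j)
    [DirectedSystem G fun i j h => f i j h] :
    associatedPrimes R (Module.DirectLimit G f) ⊆ ⋃ i : ι, associatedPrimes R (G i) := by
  intro p hp
  obtain ⟨hprime, x, hx⟩ := isAssociatedPrime_iff.mp hp
  cases isEmpty_or_nonempty ι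
  · exact (not_isAssociatedPrime_of_subsingleton hp).elim
  obtain ⟨i, m, rfl⟩ := Module.DirectLimit.exists_of x
  obtain ⟨k, hik, hk⟩ := Module.DirectLimit.exists_le_colon_bot_f_of_fg
    (IsNoetherian.noetherian p) hx.le
  have hk' : colon ⊥ {f i k hik m} ≤ p := by
    simpa only [hx, Module.DirectLimit.of_f] using
      colon_bot_singleton_le_map (Module.DirectLimit.of R ι G f k) (f i k hik m)
  exact Set.mem_iUnion.mpr ⟨k, isAssociatedPrime_iff.mpr ⟨hprime, _, le_antisymm hk hk'⟩⟩
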